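/- (Hindsight representation of the Q-function for transition rewards; core identity in the proof of Theorem A.2.) Let r : S × A × S → ℝ be a reward function of transitions. For s ∈ S, a ∈ A define Q(s,a) := Σ_{k=0}^∞ γ^k · Σ_{u∈S} Σ_{b∈A} Σ_{u'∈S} Ja_k(s,a;u,b,u')·r(u,b,u'); this series converges absolutely. If π(s,a) > 0, then Q(s,a) = Σ_{k=0}^∞ γ^k · Σ_{u∈S} Σ_{b∈A} Σ_{u'∈S} Jπ_k(s;u,b,u') · (ĥ_k(a|s,u,b,u') / π(s,a)) · r(u,b,u'), and this series also converges absolutely. -/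

import Mathlib

open Finset

noncomputable section
open scoped Classical

/-- n-step state probabilities induced by a policy `π` and a transition kernel `p`:
`Pn 0 s s' = [s' = s]` and `Pn (n+1) s s' = ∑ a, π s a * ∑ s'', p s a s'' * Pn n s'' s'`. -/
def Pn {S A : Type*} [Fintype S] [Fintype A] (p : S → A → S → ℝ) (π : S → A → ℝ) :
    ℕ → S → S → ℝ
  | 0, s, s' => if s' = s then 1 else 0
  | n + 1, s, s' => ∑ a, π s a * ∑ s'', p s a s'' * Pn p π n s'' s'

/-- Action-conditioned n-step probabilities, defined for indices `n ≥ 1` by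
`Pa (n+1) s a s' = ∑ s'', p s a s'' * Pn n s'' s'` (the value at `n = 0` is irrelevant). -/
def Pa {S A : Type*} [Fintype S] [Fintype A] (p : S → A → S → ℝ) (π : S → A → ℝ) :
    ℕ → S → A → S → ℝ
  | 0, _, _, _ => 0
  | n + 1, s, a, s' => ∑ s'', p s a s'' * Pn p π n s'' s'

/-- Hindsight probability `h_n(a | s, s')`. -/
def hca {S A : Type*} [Fintype S] [Fintype A] (p : S → A → S → ℝ) (π : S → A → ℝ)
    (n : ℕ) (a : A) (s s' : S) : ℝ :=
  if 0 < Pn p π n s s' then π s a * Pa p π n s a s' / Pn p π n s s' else 0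

/-- n-step transition-occupancy probabilities under the policy:
`Jπ_n(s; u, b, u')`, with the Iverson-bracket convention at `n = 0`. -/
def Jpi {S A : Type*} [Fintype S] [Fintype A] (p : S → A → S → ℝ) (π : S → A → ℝ)
    (n : ℕ) (s u : S) (b : A) (u' : S) : ℝ :=
  if n = 0 then (if u = s then 1 else 0) * π s b * p s b u'
  else Pn p π n s u * π u b * p u b u'

/-- n-step transition-occupancy probabilities conditioned on the first action:
`Ja_n(s, a; u, b, u')`, with the Iverson-bracket convention at `n = 0`. -/
def Ja {S A : Type*} [Fintype S] [Fintype A] (p : S → A → S → ℝ) (π : S → A → ℝ)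
    (n : ℕ) (s : S) (a : A) (u : S) (b : A) (u' : S) : ℝ :=
  if n = 0 then (if u = s then 1 else 0) * (if b = a then 1 else 0) * p s a u'
  else Pa p π n s a u * π u b * p u b u'

/-- Transition-conditioned hindsight probability `ĥ_n(a | s, u, b, u')`. -/
def hhat {S A : Type*} [Fintype S] [Fintype A] (p : S → A → S → ℝ) (π : S → A → ℝ)
    (n : ℕ) (a : A) (s u : S) (b : A) (u' : S) : ℝ :=
  if 0 < Jpi p π n s u b u' then π s a * Ja p π n s a u b u' / Jpi p π n s u b u'
  else 0

/-!
Averaging the action-conditioned occupancy over the first action gives the policy occupancy,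
`Jπ_k(s; ·) = ∑_a π(s,a) Ja_k(s,a; ·)`. Hence `Jπ_k = 0` forces `Ja_k(s,a; ·) = 0` whenever
`π(s,a) > 0`, and otherwise `Jπ_k · ĥ_k(a | ·) / π(s,a) = Ja_k(s,a; ·)`.
So the two series agree term by term, and both converge absolutely because
`0 ≤ Ja_k ≤ 1` bounds their terms by `γ^k ∑ |r|`.
-/

lemma le_one_of_sum_eq_one {ι : Type*} [Fintype ι] {f : ι → ℝ} (hf0 : ∀ i, 0 ≤ f i)
    (hf1 : ∑ i, f i = 1) (i : ι) : f i ≤ 1 :=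
  hf1 ▸ single_le_sum (fun j _ => hf0 j) (mem_univ i)

lemma abs_sum_sum_sum_mul_le {α β γ : Type*} [Fintype α] [Fintype β] [Fintype γ]
    {w r : α → β → γ → ℝ} (hw0 : ∀ x y z, 0 ≤ w x y z) (hw1 : ∀ x y z, w x y z ≤ 1) :
    |∑ x, ∑ y, ∑ z, w x y z * r x y z| ≤ ∑ x, ∑ y, ∑ z, |r x y z| := by
  calc |∑ x, ∑ y, ∑ z, w x y z * r x y z|
      ≤ ∑ x, ∑ y, ∑ z, |w x y z * r x y z| := by
        refine (abs_sum_le_sum_abs _ _).trans (sum_le_sum fun x _ => ?_)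
        exact (abs_sum_le_sum_abs _ _).trans (sum_le_sum fun y _ => abs_sum_le_sum_abs _ _)
    _ ≤ ∑ x, ∑ y, ∑ z, |r x y z| := by
        refine sum_le_sum fun x _ => sum_le_sum fun y _ => sum_le_sum fun z _ => ?_
        rw [abs_mul, abs_of_nonneg (hw0 x y z)]
        exact mul_le_of_le_one_left (abs_nonneg _) (hw1 x y z)

lemma summable_abs_pow_mul_of_abs_le {γ C : ℝ} {f : ℕ → ℝ} (hγ0 : 0 ≤ γ) (hγ1 : γ < 1)
    (hf : ∀ k, |f k| ≤ C) : Summable fun k => |γ ^ k * f k| := by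
  refine ((summable_geometric_of_lt_one hγ0 hγ1).mul_right C).of_nonneg_of_le
    (fun k => abs_nonneg _) fun k => ?_
  rw [abs_mul, abs_of_nonneg (pow_nonneg hγ0 k)]
  exact mul_le_mul_of_nonneg_left (hf k) (pow_nonneg hγ0 k)

section Occupancy

variable {S A : Type*} [Fintype S] [Fintype A] {p : S → A → S → ℝ} {π : S → A → ℝ}

lemma Pn_nonneg (hp0 : ∀ s a s', 0 ≤ p s a s') (hπ0 : ∀ s a, 0 ≤ π s a) (n : ℕ) (s s' : S) :
    0 ≤ Pn p π n s s' := by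
  induction n generalizing s with
  | zero => simp only [Pn]; positivity
  | succ n ih =>
    exact sum_nonneg fun a _ =>
      mul_nonneg (hπ0 s a) (sum_nonneg fun s'' _ => mul_nonneg (hp0 s a s'') (ih s''))

lemma sum_Pn_eq_one (hp1 : ∀ s a, ∑ s', p s a s' = 1) (hπ1 : ∀ s, ∑ a, π s a = 1) (n : ℕ)
    (s : S) : ∑ s', Pn p π n s s' = 1 := by
  induction n generalizing s with
  | zero => simp [Pn]
  | succ n ih =>
    calc ∑ s', Pn p π (n + 1) s s'
        = ∑ a, π s a * ∑ s'', p s a s'' * ∑ s', Pn p π n s'' s' := by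
          simp only [Pn, mul_sum]
          rw [sum_comm]
          exact sum_congr rfl fun a _ => by rw [sum_comm]
      _ = 1 := by simp only [ih, mul_one, hp1, hπ1]

lemma Pn_le_one (hp0 : ∀ s a s', 0 ≤ p s a s') (hπ0 : ∀ s a, 0 ≤ π s a)
    (hp1 : ∀ s a, ∑ s', p s a s' = 1) (hπ1 : ∀ s, ∑ a, π s a = 1) (n : ℕ) (s s' : S) :
    Pn p π n s s' ≤ 1 :=
  le_one_of_sum_eq_one (Pn_nonneg hp0 hπ0 n s) (sum_Pn_eq_one hp1 hπ1 n s) s'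

lemma Pa_nonneg (hp0 : ∀ s a s', 0 ≤ p s a s') (hπ0 : ∀ s a, 0 ≤ π s a) (n : ℕ) (s : S) (a : A)
    (s' : S) : 0 ≤ Pa p π n s a s' := by
  cases n with
  | zero => exact le_rfl
  | succ n => exact sum_nonneg fun s'' _ => mul_nonneg (hp0 s a s'') (Pn_nonneg hp0 hπ0 n s'' s')

lemma Pa_le_one (hp0 : ∀ s a s', 0 ≤ p s a s') (hπ0 : ∀ s a, 0 ≤ π s a)
    (hp1 : ∀ s a, ∑ s', p s a s' = 1) (hπ1 : ∀ s, ∑ a, π s a = 1) (n : ℕ) (s : S) (a : A)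
    (s' : S) : Pa p π n s a s' ≤ 1 := by
  cases n with
  | zero => exact zero_le_one
  | succ n =>
    calc ∑ s'', p s a s'' * Pn p π n s'' s' ≤ ∑ s'', p s a s'' := by
          gcongr with s'' _
          exact mul_le_of_le_one_right (hp0 s a s'') (Pn_le_one hp0 hπ0 hp1 hπ1 n s'' s')
      _ = 1 := hp1 s a

lemma Ja_nonneg (hp0 : ∀ s a s', 0 ≤ p s a s') (hπ0 : ∀ s a, 0 ≤ π s a) (n : ℕ) (s : S) (a : A)
    (u : S) (b : A) (u' : S) : 0 ≤ Ja p π n s a u b u' := by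
  unfold Ja
  split_ifs
  all_goals first
    | exact mul_nonneg (mul_nonneg (Pa_nonneg hp0 hπ0 n s a u) (hπ0 u b)) (hp0 u b u')
    | simp [hp0]

lemma Ja_le_one (hp0 : ∀ s a s', 0 ≤ p s a s') (hπ0 : ∀ s a, 0 ≤ π s a)
    (hp1 : ∀ s a, ∑ s', p s a s' = 1) (hπ1 : ∀ s, ∑ a, π s a = 1) (n : ℕ) (s : S) (a : A)
    (u : S) (b : A) (u' : S) : Ja p π n s a u b u' ≤ 1 := by
  have hp (s a s') : p s a s' ≤ 1 := le_one_of_sum_eq_one (hp0 s a) (hp1 s a) s'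
  unfold Ja
  split_ifs
  all_goals first
    | exact mul_le_one₀ (mul_le_one₀ (Pa_le_one hp0 hπ0 hp1 hπ1 n s a u) (hπ0 u b)
        (le_one_of_sum_eq_one (hπ0 u) (hπ1 u) b)) (hp0 u b u') (hp u b u')
    | simp [hp]

lemma Jpi_eq_sum_mul_Ja (n : ℕ) (s u : S) (b : A) (u' : S) :
    Jpi p π n s u b u' = ∑ a, π s a * Ja p π n s a u b u' := by
  cases n with
  | zero => by_cases hu : u = s <;> simp [Jpi, Ja, hu]
  | succ n => simp only [Jpi, Ja, Nat.succ_ne_zero, if_false, Pn, Pa, sum_mul, mul_assoc]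

lemma Jpi_mul_hhat_div_eq_Ja (hp0 : ∀ s a s', 0 ≤ p s a s') (hπ0 : ∀ s a, 0 ≤ π s a) {s : S}
    {a : A} (hπa : 0 < π s a) (n : ℕ) (u : S) (b : A) (u' : S) :
    Jpi p π n s u b u' * (hhat p π n a s u b u' / π s a) = Ja p π n s a u b u' := by
  have hterm (a' : A) : 0 ≤ π s a' * Ja p π n s a' u b u' :=
    mul_nonneg (hπ0 s a') (Ja_nonneg hp0 hπ0 n s a' u b u')
  have hJpi : π s a * Ja p π n s a u b u' ≤ Jpi p π n s u b u' := by
    rw [Jpi_eq_sum_mul_Ja]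
    exact single_le_sum (fun a' _ => hterm a') (mem_univ a)
  by_cases hpos : 0 < Jpi p π n s u b u'
  · rw [hhat, if_pos hpos]
    field_simp
  · have hJpi0 : Jpi p π n s u b u' = 0 := by
      rw [Jpi_eq_sum_mul_Ja] at hpos ⊢
      exact le_antisymm (not_lt.mp hpos) (sum_nonneg fun a' _ => hterm a')
    have hJa0 : Ja p π n s a u b u' = 0 := by
      nlinarith [Ja_nonneg hp0 hπ0 n s a u b u']
    rw [hJa0, hJpi0, zero_mul]

end Occupancy

theorem hindsight_Q_representation_transition_rewards_general
    {S A : Type*} [Fintype S] [Fintype A]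
    (p : S → A → S → ℝ) (π : S → A → ℝ)
    (hp0 : ∀ s a s', 0 ≤ p s a s') (hp1 : ∀ s a, ∑ s', p s a s' = 1)
    (hπ0 : ∀ s a, 0 ≤ π s a) (hπ1 : ∀ s, ∑ a, π s a = 1)
    (γ : ℝ) (hγ0 : 0 ≤ γ) (hγ1 : γ < 1) (r : S → A → S → ℝ) (s : S) (a : A) :
    Summable (fun k : ℕ =>
      |γ ^ k * ∑ u, ∑ b, ∑ u', Ja p π k s a u b u' * r u b u'|) ∧
    (0 < π s a →
      Summable (fun k : ℕ =>
        |γ ^ k * ∑ u, ∑ b, ∑ u',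
            Jpi p π k s u b u' * (hhat p π k a s u b u' / π s a) * r u b u'|) ∧
      (∑' k : ℕ, γ ^ k * ∑ u, ∑ b, ∑ u', Ja p π k s a u b u' * r u b u') =
        ∑' k : ℕ, γ ^ k * ∑ u, ∑ b, ∑ u',
          Jpi p π k s u b u' * (hhat p π k a s u b u' / π s a) * r u b u') := by
  have hQ := summable_abs_pow_mul_of_abs_le hγ0 hγ1 fun k =>
    abs_sum_sum_sum_mul_le (r := r) (Ja_nonneg hp0 hπ0 k s a) (Ja_le_one hp0 hπ0 hp1 hπ1 k s a)
  refine ⟨hQ, fun hπa => ?_⟩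
  simp only [Jpi_mul_hhat_div_eq_Ja hp0 hπ0 hπa, and_true]
  exact hQ

/-- hindsight representation of the Q-function for transition rewards.
The series defining `Q(s,a)` converges absolutely, and when `π(s,a) > 0` it equals the
series credited through the transition-conditioned hindsight probabilities, which also
converges absolutely. -/
theorem hindsight_Q_representation_transition_rewards
    {S A : Type*} [Fintype S] [Fintype A] [Nonempty S] [Nonempty A]
    (p : S → A → S → ℝ) (π : S → A → ℝ)
    (hp0 : ∀ s a s', 0 ≤ p s a s') (hp1 : ∀ s a, ∑ s', p s a s' = 1)
    (hπ0 : ∀ s a, 0 ≤ π s a) (hπ1 : ∀ s, ∑ a, π s a = 1)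
    (γ : ℝ) (hγ0 : 0 ≤ γ) (hγ1 : γ < 1) (r : S → A → S → ℝ) (s : S) (a : A) :
    Summable (fun k : ℕ =>
      |γ ^ k * ∑ u, ∑ b, ∑ u', Ja p π k s a u b u' * r u b u'|) ∧
    (0 < π s a →
      Summable (fun k : ℕ =>
        |γ ^ k * ∑ u, ∑ b, ∑ u',
            Jpi p π k s u b u' * (hhat p π k a s u b u' / π s a) * r u b u'|) ∧
      (∑' k : ℕ, γ ^ k * ∑ u, ∑ b, ∑ u', Ja p π k s a u b u' * r u b u') =
        ∑' k : ℕ, γ ^ k * ∑ u, ∑ b, ∑ u',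
          Jpi p π k s u b u' * (hhat p π k a s u b u' / π s a) * r u b u') :=
  hindsight_Q_representation_transition_rewards_general p π hp0 hp1 hπ0 hπ1 γ hγ0 hγ1 r s a

end
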